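/- For any integer k ≥ 1 and real parameters ζ ∈ (0,1), η > 1, the operator G has exactly one fixed point in (0,∞)³, namely (1, v*, v*) where v* is the unique positive solution of v = ((ζ+1+2v)/(2+(1+η)v))^k. -/

import Mathlib

/-!
At a fixed point `(u, v, w)` the three coordinates are `k`-th powers of ratios over the common
denominator `D`. The numerators of `v` and `w` differ by `(1 - ζ)(1 - u)`, and the numerator of `u`
exceeds `D` by `(η - 1)(w - v)`; since `t ↦ t ^ k` is increasing, `u < 1` forces `v < w`, which
forces `u > 1`, and symmetrically. Hence `u = 1`, then `v = w`, and `v = f(v) ^ k` with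
`f(v) = (ζ + 1 + 2v) / (2 + (1 + η)v)`.

Putting `x = f(v)`, so `v = x ^ k`, this scalar equation becomes
`2x + (1 + η)x ^ (k + 1) - 2x ^ k = ζ + 1`. The left side vanishes at `0`, equals `1 + η` at `1`,
and is strictly increasing on `[0, ∞)` because `k x ^ (k - 1) ≤ (k - 1) x ^ k + 1` (AM-GM), so it
has exactly one positive root.
-/

/-- The operator `G` of the BCC-DNA model (q = 2), acting on triples `(u, v, w)`. -/
noncomputable def Gop (k : ℕ) (ζ η : ℝ) (p : ℝ × ℝ × ℝ) : ℝ × ℝ × ℝ :=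
  let u := p.1; let v := p.2.1; let w := p.2.2
  ( ((1 + u + v + η * w) / (1 + u + η * v + w)) ^ k,
    ((ζ + u + v + w) / (1 + u + η * v + w)) ^ k,
    ((1 + ζ * u + v + w) / (1 + u + η * v + w)) ^ k )

open Set

lemma add_one_mul_pow_le (n : ℕ) {x : ℝ} (hx : 0 ≤ x) :
    (n + 1) * x ^ n ≤ n * x ^ (n + 1) + 1 := by
  induction n with
  | zero => simp
  | succ n ih =>
    have hsign : 0 ≤ (x - 1) * (x ^ (n + 1) - 1) := by
      rcases le_total x 1 with h | h
      · exact mul_nonneg_of_nonpos_of_nonpos (by linarith)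
          (by linarith [pow_le_one₀ (n := n + 1) hx h])
      · exact mul_nonneg (by linarith) (by linarith [one_le_pow₀ (n := n + 1) h])
    push_cast
    nlinarith [mul_le_mul_of_nonneg_left ih hx, pow_succ x n, pow_succ x (n + 1)]

def rootPoly (k : ℕ) (η x : ℝ) : ℝ := 2 * x + (1 + η) * x ^ (k + 1) - 2 * x ^ k

lemma strictMonoOn_rootPoly {k : ℕ} (hk : k ≠ 0) {η : ℝ} (hη : 1 ≤ η) :
    StrictMonoOn (rootPoly k η) (Ici 0) := by
  obtain ⟨m, rfl⟩ := Nat.exists_eq_succ_of_ne_zero hk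
  refine strictMonoOn_of_deriv_pos (convex_Ici 0) (by unfold rootPoly; fun_prop) fun x hx => ?_
  rw [interior_Ici, mem_Ioi] at hx
  have hderiv : HasDerivAt (rootPoly (m + 1) η)
      (2 * 1 + (1 + η) * ((m + 2 : ℕ) * x ^ (m + 2 - 1)) - 2 * ((m + 1 : ℕ) * x ^ (m + 1 - 1))) x :=
    (((hasDerivAt_id' x).const_mul 2).add ((hasDerivAt_pow (m + 2) x).const_mul (1 + η))).sub
      ((hasDerivAt_pow (m + 1) x).const_mul 2)
  rw [hderiv.deriv]
  have hamgm := add_one_mul_pow_le m hx.le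
  have hpos := pow_pos hx (m + 1)
  simp only [Nat.add_sub_cancel]
  push_cast
  nlinarith [mul_le_mul_of_nonneg_right hη hpos.le]

lemma existsUnique_rootPoly_eq {k : ℕ} (hk : k ≠ 0) {η c : ℝ} (hη : 1 ≤ η) (hc0 : 0 < c)
    (hc : c ≤ 1 + η) : ∃! x, 0 < x ∧ rootPoly k η x = c := by
  have hP0 : rootPoly k η 0 = 0 := by simp [rootPoly, hk]
  have hP1 : rootPoly k η 1 = 1 + η := by simp [rootPoly]
  obtain ⟨x, hx, hPx⟩ := intermediate_value_Icc zero_le_one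
    (by unfold rootPoly; fun_prop : ContinuousOn (rootPoly k η) (Icc 0 1))
    (show c ∈ Icc (rootPoly k η 0) (rootPoly k η 1) by rw [hP0, hP1]; exact ⟨hc0.le, hc⟩)
  have hx0 : 0 < x := hx.1.lt_of_ne (by rintro rfl; linarith)
  refine ⟨x, ⟨hx0, hPx⟩, fun y ⟨hy0, hPy⟩ => ?_⟩
  exact (strictMonoOn_rootPoly hk hη).injOn hy0.le hx0.le (hPy.trans hPx.symm)

lemma rootPoly_eq_iff {k : ℕ} {ζ η x v : ℝ} (hv : v = x ^ k) (hden : 0 < 2 + (1 + η) * v) :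
    rootPoly k η x = ζ + 1 ↔ x = (ζ + 1 + 2 * v) / (2 + (1 + η) * v) := by
  rw [eq_div_iff hden.ne', rootPoly, pow_succ, ← hv]
  constructor <;> intro h <;> linarith

lemma existsUnique_pos_eq_div_pow {k : ℕ} (hk : k ≠ 0) {ζ η : ℝ} (hζ : 0 < ζ + 1)
    (hζη : ζ ≤ η) (hη : 1 ≤ η) :
    ∃! v, 0 < v ∧ v = ((ζ + 1 + 2 * v) / (2 + (1 + η) * v)) ^ k := by
  have hden : ∀ v : ℝ, 0 ≤ v → 0 < 2 + (1 + η) * v := fun v hv => by nlinarith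
  obtain ⟨x, ⟨hx0, hx⟩, huniq⟩ := existsUnique_rootPoly_eq hk hη hζ (by linarith)
  refine ⟨x ^ k, ⟨pow_pos hx0 k, ?_⟩, fun v ⟨hv0, hv⟩ => ?_⟩
  · rw [← (rootPoly_eq_iff rfl (hden _ (pow_pos hx0 k).le)).1 hx]
  · have hroot := (rootPoly_eq_iff hv (hden v hv0.le)).2 rfl
    rw [hv, huniq _ ⟨div_pos (by linarith) (hden v hv0.le), hroot⟩]

lemma lt_iff_of_div_pow_eq {k : ℕ} (hk : k ≠ 0) {a b d x y : ℝ} (ha : 0 ≤ a) (hb : 0 ≤ b)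
    (hd : 0 < d) (hx : (a / d) ^ k = x) (hy : (b / d) ^ k = y) : x < y ↔ a < b := by
  subst hx hy
  rw [pow_lt_pow_iff_left₀ (div_nonneg ha hd.le) (div_nonneg hb hd.le) hk,
    div_lt_div_iff_of_pos_right hd]

lemma Gop_eq_self_iff {k : ℕ} (hk : k ≠ 0) {ζ η : ℝ} (hζ0 : 0 ≤ ζ) (hζ1 : ζ < 1) (hη : 1 < η)
    {u v w : ℝ} (hu : 0 < u) (hv : 0 < v) (hw : 0 < w) :
    Gop k ζ η (u, v, w) = (u, v, w) ↔
      u = 1 ∧ w = v ∧ v = ((ζ + 1 + 2 * v) / (2 + (1 + η) * v)) ^ k := by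
  have hd : 0 < 1 + u + η * v + w := by nlinarith
  have hone : ((1 + u + η * v + w) / (1 + u + η * v + w)) ^ k = 1 := by
    rw [div_self hd.ne', one_pow]
  simp only [Gop, Prod.mk.injEq]
  constructor
  · rintro ⟨hfu, hfv, hfw⟩
    have hvw : v < w ↔ u < 1 := by
      rw [lt_iff_of_div_pow_eq hk (by positivity) (by positivity) hd hfv hfw]
      constructor <;> intro h <;> nlinarith
    have hwv : w < v ↔ 1 < u := by
      rw [lt_iff_of_div_pow_eq hk (by positivity) (by positivity) hd hfw hfv]
      constructor <;> intro h <;> nlinarith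
    have hu_lt : u < 1 ↔ w < v := by
      rw [lt_iff_of_div_pow_eq hk (by positivity) (by positivity) hd hfu hone]
      constructor <;> intro h <;> nlinarith
    have hu_gt : 1 < u ↔ v < w := by
      rw [lt_iff_of_div_pow_eq hk (by positivity) (by positivity) hd hone hfu]
      constructor <;> intro h <;> nlinarith
    obtain rfl : u = 1 := le_antisymm (not_lt.1 fun h => (hwv.2 h).asymm (hu_gt.1 h))
      (not_lt.1 fun h => (hvw.2 h).asymm (hu_lt.1 h))
    obtain rfl : w = v := by
      rwa [show ζ + 1 + v + w = 1 + ζ * 1 + v + w by ring, hfw] at hfv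
    refine ⟨rfl, rfl, ?_⟩
    convert hfv.symm using 3 <;> ring
  · rintro ⟨rfl, rfl, hfix⟩
    refine ⟨?_, ?_, ?_⟩
    · convert hone using 3; ring
    all_goals convert hfix.symm using 3 <;> ring

/-- `G` has exactly one fixed point in `(0,∞)³`, namely `(1, v*, v*)` where `v*`
is the unique positive solution of `v = ((ζ+1+2v)/(2+(1+η)v))^k`. -/
theorem unique_fixed_point_G (k : ℕ) (hk : 1 ≤ k) (ζ η : ℝ)
    (hζ0 : 0 < ζ) (hζ1 : ζ < 1) (hη : 1 < η) :
    ∃ v : ℝ, (0 < v ∧ v = ((ζ + 1 + 2 * v) / (2 + (1 + η) * v)) ^ k) ∧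
      (∀ v' : ℝ, 0 < v' → v' = ((ζ + 1 + 2 * v') / (2 + (1 + η) * v')) ^ k →
        v' = v) ∧
      ∀ p : ℝ × ℝ × ℝ, (0 < p.1 ∧ 0 < p.2.1 ∧ 0 < p.2.2) →
        (Gop k ζ η p = p ↔ p = (1, v, v)) := by
  have hk0 : k ≠ 0 := Nat.one_le_iff_ne_zero.mp hk
  obtain ⟨v, hv, huniq⟩ :=
    existsUnique_pos_eq_div_pow (ζ := ζ) hk0 (by linarith) (by linarith) hη.le
  refine ⟨v, hv, fun v' hv'0 hv' => huniq v' ⟨hv'0, hv'⟩, ?_⟩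
  rintro ⟨u, v', w⟩ (⟨hu, hv', hw⟩ : 0 < u ∧ 0 < v' ∧ 0 < w)
  rw [Gop_eq_self_iff hk0 hζ0.le hζ1 hη hu hv' hw, Prod.mk.injEq, Prod.mk.injEq]
  constructor
  · rintro ⟨rfl, rfl, hfix⟩
    exact ⟨rfl, huniq w ⟨hv', hfix⟩, huniq w ⟨hv', hfix⟩⟩
  · rintro ⟨rfl, rfl, rfl⟩
    exact ⟨rfl, rfl, hv.2⟩
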